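/- arXiv:2302.11746 — 2 statements merged into one kernel-verified Lean document; each statement's English description precedes it below -/
import Mathlib

section
/- Let (M, d) be a complete CAT(0) space and X an M-valued random element with E[d(X, u)²] < ∞ for some u ∈ M. Then the Fréchet functional F(μ) = E[d(X, μ)²] has a unique minimizer μ* ∈ M. -/
/-! The CN inequality `d(p,m)² ≤ d(p,q)²/2 + d(p,r)²/2 - d(q,r)²/4` for the geodesic midpoint
`m` of `[q,r]` comes from comparing with a Euclidean triangle, where it is Apollonius' theorem.
Integrated against the law of `X` it gives `F m ≤ F q / 2 + F r / 2 - d(q,r)²/4` for the Fréchet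
functional `F`, so points whose values are close to `inf F` are close to each other. Hence a
minimizing sequence is Cauchy, its limit minimizes the continuous `F`, and two minimizers
coincide. -/

open MeasureTheory

/-- A (unit-speed) geodesic segment from `p` to `q`, parameterized on `[0, dist p q]`. -/
def IsGeodesicSeg {M : Type*} [MetricSpace M] (γ : ℝ → M) (p q : M) : Prop :=
  γ 0 = p ∧ γ (dist p q) = q ∧
    ∀ s ∈ Set.Icc (0 : ℝ) (dist p q), ∀ t ∈ Set.Icc (0 : ℝ) (dist p q),
      dist (γ s) (γ t) = |s - t|

/-- Curvature bounded above by `0` via Euclidean comparison triangles. -/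
def IsCAT0 (M : Type*) [MetricSpace M] : Prop :=
  ∀ (p q r : M) (γ₁ γ₂ : ℝ → M), IsGeodesicSeg γ₁ p q → IsGeodesicSeg γ₂ p r →
    ∀ (p' q' r' : EuclideanSpace ℝ (Fin 2)) (η₁ η₂ : ℝ → EuclideanSpace ℝ (Fin 2)),
      IsGeodesicSeg η₁ p' q' → IsGeodesicSeg η₂ p' r' →
      dist p' q' = dist p q → dist p' r' = dist p r → dist q' r' = dist q r →
      ∀ s ∈ Set.Icc (0 : ℝ) (dist p q), ∀ t ∈ Set.Icc (0 : ℝ) (dist p r),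
        dist (γ₁ s) (γ₂ t) ≤ dist (η₁ s) (η₂ t)

open Filter Set

lemma dist_sq_le_two_mul_add {M : Type*} [PseudoMetricSpace M] (x y z : M) :
    dist x z ^ 2 ≤ 2 * (dist x y ^ 2 + dist y z ^ 2) :=
  (pow_le_pow_left₀ dist_nonneg (dist_triangle x y z) 2).trans add_sq_le

section Segment

variable {E : Type*} [NormedAddCommGroup E] [NormedSpace ℝ E]

noncomputable def unitSpeedSegment (p q : E) (t : ℝ) : E :=
  AffineMap.lineMap p q (t / dist p q)

lemma isGeodesicSeg_unitSpeedSegment (p q : E) : IsGeodesicSeg (unitSpeedSegment p q) p q := by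
  rcases eq_or_ne p q with rfl | hpq
  · refine ⟨by simp [unitSpeedSegment], by simp [unitSpeedSegment], fun s hs t ht => ?_⟩
    simp only [dist_self, Icc_self, mem_singleton_iff] at hs ht
    simp [hs, ht]
  · have hd : dist p q ≠ 0 := dist_ne_zero.2 hpq
    refine ⟨by simp [unitSpeedSegment], by simp [unitSpeedSegment, hd], fun s _ t _ => ?_⟩
    rw [unitSpeedSegment, unitSpeedSegment, dist_lineMap_lineMap, Real.dist_eq, ← sub_div,
      abs_div, abs_of_nonneg dist_nonneg, div_mul_cancel₀ _ hd]

lemma unitSpeedSegment_half_dist (p q : E) :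
    unitSpeedSegment p q (dist p q / 2) = midpoint ℝ p q := by
  rcases eq_or_ne p q with rfl | hpq
  · simp [unitSpeedSegment]
  · have hd : dist p q ≠ 0 := dist_ne_zero.2 hpq
    rw [unitSpeedSegment, midpoint, div_div_cancel_left' hd, invOf_eq_inv]

end Segment

lemma dist_euclidean_pair (x₁ y₁ x₂ y₂ : ℝ) :
    dist !₂[x₁, y₁] !₂[x₂, y₂] = √((x₁ - x₂) ^ 2 + (y₁ - y₂) ^ 2) := by
  simp [EuclideanSpace.dist_eq, Fin.sum_univ_two, Real.dist_eq, sq_abs]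

lemma exists_euclidean_triangle {a b c : ℝ} (hab : a ≤ b + c) (hbc : b ≤ a + c)
    (hca : c ≤ a + b) :
    ∃ p q r : EuclideanSpace ℝ (Fin 2), dist p q = b ∧ dist p r = c ∧ dist q r = a := by
  have ha : 0 ≤ a := by linarith
  have hb : 0 ≤ b := by linarith
  have hc : 0 ≤ c := by linarith
  -- for `b = 0` the division gives `x = 0`, which still works since then `a = c`
  set x := (b ^ 2 + c ^ 2 - a ^ 2) / (2 * b)
  have hx : 2 * b * x = b ^ 2 + c ^ 2 - a ^ 2 ∧ x ^ 2 ≤ c ^ 2 := by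
    rcases hb.eq_or_lt with rfl | hb
    · have : a = c := by linarith
      simp [x, this, sq_nonneg]
    · refine ⟨by simp only [x]; field_simp, ?_⟩
      rw [div_pow, div_le_iff₀ (by positivity)]
      -- Heron: `4b²c² - (b² + c² - a²)²` is the product below
      nlinarith [mul_nonneg (mul_nonneg (mul_nonneg (by linarith : (0:ℝ) ≤ a + c - b)
        (by linarith : (0:ℝ) ≤ a + b - c)) (by linarith : (0:ℝ) ≤ b + c - a))
        (by linarith : (0:ℝ) ≤ a + b + c)]
  set y := √(c ^ 2 - x ^ 2)
  have hy : y ^ 2 = c ^ 2 - x ^ 2 := Real.sq_sqrt (by linarith)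
  refine ⟨!₂[0, 0], !₂[b, 0], !₂[x, y], ?_, ?_, ?_⟩ <;> rw [dist_euclidean_pair]
  · simpa using Real.sqrt_sq hb
  · rw [← Real.sqrt_sq hc]; congr 1; linarith
  · rw [← Real.sqrt_sq ha]; congr 1; nlinarith

lemma IsCAT0.exists_cn_point {M : Type*} [MetricSpace M] (hcat : IsCAT0 M)
    (hgeo : ∀ p q : M, ∃ γ : ℝ → M, IsGeodesicSeg γ p q) (q r : M) :
    ∃ m : M, ∀ p : M,
      dist p m ^ 2 ≤ dist p q ^ 2 / 2 + dist p r ^ 2 / 2 - dist q r ^ 2 / 4 := by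
  obtain ⟨γ, hγ⟩ := hgeo q r
  refine ⟨γ (dist q r / 2), fun p => ?_⟩
  obtain ⟨σ, hσ⟩ := hgeo q p
  obtain ⟨q', r', p', hqr, hqp, hrp⟩ := exists_euclidean_triangle
    (by linarith [dist_triangle r q p, dist_comm q r] : dist r p ≤ dist q r + dist q p)
    (by linarith [dist_triangle q p r, dist_comm p r] : dist q r ≤ dist r p + dist q p)
    (dist_triangle q r p |>.trans_eq (add_comm _ _))
  have hmid : unitSpeedSegment q' r' (dist q r / 2) = midpoint ℝ q' r' :=
    hqr ▸ unitSpeedSegment_half_dist q' r'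
  have hend : unitSpeedSegment q' p' (dist q p) = p' :=
    hqp ▸ (isGeodesicSeg_unitSpeedSegment q' p').2.1
  -- compare at the vertex `q`, between the midpoint of `[q, r]` and the endpoint `p` of `[q, p]`
  have hcmp := hcat q r p γ σ hγ hσ q' r' p' _ _ (isGeodesicSeg_unitSpeedSegment q' r')
    (isGeodesicSeg_unitSpeedSegment q' p') hqr hqp hrp (dist q r / 2)
    ⟨by positivity, by linarith [dist_nonneg (x := q) (y := r)]⟩ (dist q p)
    ⟨dist_nonneg, le_rfl⟩
  rw [hσ.2.1, hmid, hend] at hcmp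
  have hapollonius :=
    EuclideanGeometry.dist_sq_add_dist_sq_eq_two_mul_dist_midpoint_sq_add_half_dist_sq p' q' r'
  rw [dist_comm p' q', dist_comm p' r', hqp, hrp, hqr] at hapollonius
  calc dist p (γ (dist q r / 2)) ^ 2 ≤ dist p' (midpoint ℝ q' r') ^ 2 := by
        rw [dist_comm, dist_comm p']; exact pow_le_pow_left₀ dist_nonneg hcmp 2
    _ = dist p q ^ 2 / 2 + dist p r ^ 2 / 2 - dist q r ^ 2 / 4 := by
        rw [dist_comm p q, dist_comm p r]; linarith

section UniformlyMidpointConvex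

variable {M : Type*} [MetricSpace M]

def UniformlyMidpointConvex (F : M → ℝ) : Prop :=
  ∀ q r : M, ∃ m, F m ≤ F q / 2 + F r / 2 - dist q r ^ 2 / 4

variable {F : M → ℝ}

lemma UniformlyMidpointConvex.dist_sq_le (hmid : UniformlyMidpointConvex F) {I : ℝ}
    (hI : ∀ x, I ≤ F x) {q r : M} {ε δ : ℝ} (hq : F q ≤ I + ε) (hr : F r ≤ I + δ) :
    dist q r ^ 2 ≤ 2 * (ε + δ) := by
  obtain ⟨m, hm⟩ := hmid q r
  linarith [hI m]

theorem UniformlyMidpointConvex.existsUnique_forall_le [CompleteSpace M] [Nonempty M]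
    (hmid : UniformlyMidpointConvex F) (hF : Continuous F) (hbdd : BddBelow (range F)) :
    ∃! x, ∀ y, F x ≤ F y := by
  set I := sInf (range F)
  have hI : ∀ x, I ≤ F x := fun x => csInf_le hbdd ⟨x, rfl⟩
  obtain ⟨v, hv_anti, hv_lim, hv_mem⟩ := exists_seq_tendsto_sInf (range_nonempty F) hbdd
  choose x hx using hv_mem
  have hcauchy : CauchySeq x := by
    refine cauchySeq_of_le_tendsto_0 (fun N => √(4 * (v N - I))) (fun n k N hn hk => ?_) ?_
    · refine Real.le_sqrt_of_sq_le ?_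
      have := hmid.dist_sq_le hI (ε := v N - I) (δ := v N - I)
        (by linarith [hx n, hv_anti hn]) (by linarith [hx k, hv_anti hk])
      linarith
    · simpa [I] using ((hv_lim.sub_const I).const_mul 4).sqrt
  obtain ⟨x₀, hx₀⟩ := cauchySeq_tendsto_of_complete hcauchy
  have hFx₀ : F x₀ = I :=
    tendsto_nhds_unique ((hF.tendsto x₀).comp hx₀)
      (by simpa [Function.comp_def, hx] using hv_lim)
  refine ⟨x₀, fun y => hFx₀ ▸ hI y, fun y hy => ?_⟩
  have := hmid.dist_sq_le hI (q := y) (r := x₀) (ε := 0) (δ := 0)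
    (by linarith [hy x₀]) (by linarith)
  exact dist_le_zero.1 (by nlinarith [dist_nonneg (x := y) (y := x₀)])

end UniformlyMidpointConvex

section FrechetFunctional

variable {M Ω : Type*} [MetricSpace M] [MeasurableSpace M] [OpensMeasurableSpace M]
  [MeasurableSpace Ω] {P : Measure Ω} {X : Ω → M}

lemma aestronglyMeasurable_dist_sq (hX : Measurable X) (μ : M) :
    AEStronglyMeasurable (fun ω => dist (X ω) μ ^ 2) P :=
  (((continuous_id.dist continuous_const).pow 2).measurable.comp hX).aestronglyMeasurable

variable [IsFiniteMeasure P] {u : M}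

lemma integrable_dist_sq (hX : Measurable X) (hint : Integrable (fun ω => dist (X ω) u ^ 2) P)
    (μ : M) : Integrable (fun ω => dist (X ω) μ ^ 2) P :=
  ((hint.add (integrable_const (dist u μ ^ 2))).const_mul 2).mono'
    (aestronglyMeasurable_dist_sq hX μ) (ae_of_all _ fun ω => by
      rw [Real.norm_eq_abs, abs_of_nonneg (by positivity)]
      exact dist_sq_le_two_mul_add _ u _)

lemma continuous_integral_dist_sq (hX : Measurable X)
    (hint : Integrable (fun ω => dist (X ω) u ^ 2) P) :
    Continuous fun μ => ∫ ω, dist (X ω) μ ^ 2 ∂P := by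
  refine continuous_iff_continuousAt.2 fun μ₀ => continuousAt_of_dominated
    (bound := fun ω => 2 * (dist (X ω) u ^ 2 + (dist u μ₀ + 1) ^ 2))
    (Eventually.of_forall (aestronglyMeasurable_dist_sq hX)) ?_
    ((hint.add (integrable_const _)).const_mul 2) (ae_of_all _ fun ω => by fun_prop)
  filter_upwards [Metric.ball_mem_nhds μ₀ one_pos] with μ hμ
  refine ae_of_all _ fun ω => ?_
  have hu : dist u μ ≤ dist u μ₀ + 1 :=
    (dist_triangle u μ₀ μ).trans (by linarith [Metric.mem_ball'.1 hμ])
  rw [Real.norm_eq_abs, abs_of_nonneg (by positivity)]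
  calc dist (X ω) μ ^ 2 ≤ 2 * (dist (X ω) u ^ 2 + dist u μ ^ 2) :=
        dist_sq_le_two_mul_add _ _ _
    _ ≤ 2 * (dist (X ω) u ^ 2 + (dist u μ₀ + 1) ^ 2) := by gcongr

end FrechetFunctional

lemma integral_dist_sq_le_of_forall_dist_sq_le {M Ω : Type*} [MetricSpace M]
    [MeasurableSpace Ω] {P : Measure Ω} [IsProbabilityMeasure P] {X : Ω → M}
    (hint : ∀ μ, Integrable (fun ω => dist (X ω) μ ^ 2) P) {q r m : M}
    (hm : ∀ p, dist p m ^ 2 ≤ dist p q ^ 2 / 2 + dist p r ^ 2 / 2 - dist q r ^ 2 / 4) :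
    ∫ ω, dist (X ω) m ^ 2 ∂P ≤
      (∫ ω, dist (X ω) q ^ 2 ∂P) / 2 + (∫ ω, dist (X ω) r ^ 2 ∂P) / 2 - dist q r ^ 2 / 4 := by
  have hqr : Integrable (fun ω => dist (X ω) q ^ 2 / 2 + dist (X ω) r ^ 2 / 2) P :=
    ((hint q).div_const 2).add ((hint r).div_const 2)
  calc ∫ ω, dist (X ω) m ^ 2 ∂P
      ≤ ∫ ω, (dist (X ω) q ^ 2 / 2 + dist (X ω) r ^ 2 / 2 - dist q r ^ 2 / 4) ∂P :=
        integral_mono (hint m) (hqr.sub (integrable_const _)) fun ω => hm (X ω)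
    _ = _ := by
        rw [integral_sub hqr (integrable_const _), integral_add ((hint q).div_const 2)
          ((hint r).div_const 2), integral_div, integral_div, integral_const, probReal_univ,
          one_smul]

theorem stmt12 {M Ω : Type*} [MetricSpace M] [CompleteSpace M] [MeasurableSpace M]
    [BorelSpace M] [MeasurableSpace Ω]
    (hgeo : ∀ p q : M, ∃ γ : ℝ → M, IsGeodesicSeg γ p q) (hcat : IsCAT0 M)
    (P : Measure Ω) [IsProbabilityMeasure P]
    (X : Ω → M) (hX : Measurable X)
    (u : M) (hint : Integrable (fun ω => dist (X ω) u ^ 2) P) :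
    ∃! μs : M, ∀ μ : M,
      ∫ ω, dist (X ω) μs ^ 2 ∂P ≤ ∫ ω, dist (X ω) μ ^ 2 ∂P := by
  have : Nonempty M := ⟨u⟩
  refine UniformlyMidpointConvex.existsUnique_forall_le (fun q r => ?_)
    (continuous_integral_dist_sq hX hint) ⟨0, ?_⟩
  · obtain ⟨m, hm⟩ := hcat.exists_cn_point hgeo q r
    exact ⟨m, integral_dist_sq_le_of_forall_dist_sq_le (integrable_dist_sq hX hint) hm⟩
  · rintro _ ⟨μ, rfl⟩
    exact integral_nonneg fun ω => sq_nonneg _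
end

section
/- Let (M, d) be a uniquely geodesic space satisfying: there exist C_U > 0 and α_U ∈ (0,1] with |d(p,q)cos(∠_p(u,q)) − d(p,r)cos(∠_p(u,r))| ≤ C_U·d(q,r)^{α_U} for all p,q,r,u ∈ M (Alexandrov angles). Suppose moreover that the support of X is contained in a ball of radius R around μ. Then for all β, β' ∈ M and all x in the support of X, |h(β; x, μ) − h(β'; x, μ)| ≤ C_U·R·d(β, β')^{α_U}, where h(β; x, μ) = d(μ,x)·d(μ,β)·cos(∠_μ(x,β)). Consequently |E[Y·h(β;X,μ) − log(1+e^{h(β;X,μ)})] − E[Y·h(β';X,μ) − log(1+e^{h(β';X,μ)})]| ≤ 2·C_U·R·d(β,β')^{α_U}. -/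
/-!
The logit `h(β; x, μ)` is `d(μ, x) ≤ R` times the quantity controlled by the angle-Lipschitz
hypothesis. The Bernoulli log-likelihood `y * h - log (1 + e ^ h)` is `1`-Lipschitz in `h` for
`y ∈ [0, 1]`, its derivative `y - sigmoid h` lying in `[-1, 1]`; a pointwise bound then
integrates against the probability measure.
-/

open MeasureTheory Real Set

theorem hasDerivAt_log_one_add_exp (t : ℝ) :
    HasDerivAt (fun t => log (1 + exp t)) (sigmoid t) t := by
  have h := ((hasDerivAt_exp t).const_add 1).log (by positivity)
  convert h using 1
  rw [sigmoid_def, exp_neg]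
  field_simp
  ring

theorem lipschitzWith_mul_sub_log_one_add_exp {y : ℝ} (hy : y ∈ Icc 0 1) :
    LipschitzWith 1 (fun t => y * t - log (1 + exp t)) := by
  have hd (t : ℝ) : HasDerivAt (fun t => y * t - log (1 + exp t)) (y - sigmoid t) t := by
    have h := ((hasDerivAt_id' t).const_mul y).sub (hasDerivAt_log_one_add_exp t)
    rwa [mul_one] at h
  refine lipschitzWith_of_nnnorm_deriv_le (fun t => (hd t).differentiableAt) fun t => ?_
  rw [(hd t).deriv, ← NNReal.coe_le_coe, coe_nnnorm, NNReal.coe_one, Real.norm_eq_abs, abs_le]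
  constructor <;> linarith [hy.1, hy.2, sigmoid_nonneg t, sigmoid_le_one t]

theorem abs_integral_sub_integral_le {Ω : Type*} [MeasurableSpace Ω] {P : Measure Ω}
    [IsProbabilityMeasure P] {f g : Ω → ℝ} (hf : Integrable f P) (hg : Integrable g P)
    {C : ℝ} (hfg : ∀ ω, |f ω - g ω| ≤ C) :
    |∫ ω, f ω ∂P - ∫ ω, g ω ∂P| ≤ C := by
  rw [← integral_sub hf hg]
  simpa using norm_integral_le_of_norm_le_const (μ := P) (f := fun ω => f ω - g ω)
    (.of_forall hfg)

theorem abs_dist_mul_dist_mul_cos_sub_le {M : Type*} [PseudoMetricSpace M]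
    (angle : M → M → M → ℝ) {CU αU : ℝ}
    (hlip : ∀ p q r u : M,
      |dist p q * cos (angle p u q) - dist p r * cos (angle p u r)| ≤ CU * dist q r ^ αU)
    {p x : M} {R : ℝ} (hx : dist p x ≤ R) (q r : M) :
    |dist p x * dist p q * cos (angle p x q) - dist p x * dist p r * cos (angle p x r)| ≤
      CU * R * dist q r ^ αU := by
  calc |dist p x * dist p q * cos (angle p x q) - dist p x * dist p r * cos (angle p x r)|
      = dist p x * |dist p q * cos (angle p x q) - dist p r * cos (angle p x r)| := by
        rw [mul_assoc, mul_assoc, ← mul_sub, abs_mul, abs_of_nonneg dist_nonneg]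
    _ ≤ R * (CU * dist q r ^ αU) :=
        mul_le_mul hx (hlip p q r x) (abs_nonneg _) (dist_nonneg.trans hx)
    _ = CU * R * dist q r ^ αU := by ring

theorem stmt16_general {M Ω : Type*} [MetricSpace M] [MeasurableSpace Ω]
    (angle : M → M → M → ℝ)
    (CU αU : ℝ)
    (hlip : ∀ p q r u : M,
      |dist p q * Real.cos (angle p u q) - dist p r * Real.cos (angle p u r)| ≤
        CU * dist q r ^ αU)
    (P : Measure Ω) [IsProbabilityMeasure P]
    (X : Ω → M) (Y : Ω → ℝ) (hY01 : ∀ ω, Y ω = 0 ∨ Y ω = 1)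
    (μm : M) (R : ℝ) (hsupp : ∀ ω, dist μm (X ω) ≤ R)
    (hint : ∀ β : M, Integrable (fun ω =>
      Y ω * (dist μm (X ω) * dist μm β * Real.cos (angle μm (X ω) β)) -
        Real.log (1 + Real.exp
          (dist μm (X ω) * dist μm β * Real.cos (angle μm (X ω) β)))) P) :
    (∀ (β β' : M) (ω : Ω),
      |dist μm (X ω) * dist μm β * Real.cos (angle μm (X ω) β) -
          dist μm (X ω) * dist μm β' * Real.cos (angle μm (X ω) β')| ≤
        CU * R * dist β β' ^ αU) ∧
    ∀ β β' : M,
      |(∫ ω, (Y ω * (dist μm (X ω) * dist μm β * Real.cos (angle μm (X ω) β)) -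
            Real.log (1 + Real.exp
              (dist μm (X ω) * dist μm β * Real.cos (angle μm (X ω) β)))) ∂P) -
          ∫ ω, (Y ω * (dist μm (X ω) * dist μm β' * Real.cos (angle μm (X ω) β')) -
            Real.log (1 + Real.exp
              (dist μm (X ω) * dist μm β' * Real.cos (angle μm (X ω) β')))) ∂P| ≤
        2 * CU * R * dist β β' ^ αU := by
  have hlogit (β β' : M) (ω : Ω) :=
    abs_dist_mul_dist_mul_cos_sub_le angle hlip (hsupp ω) β β'
  refine ⟨hlogit, fun β β' => abs_integral_sub_integral_le (hint β) (hint β') fun ω => ?_⟩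
  have hY : Y ω ∈ Icc 0 1 := by rcases hY01 ω with h | h <;> simp [h]
  have hloglik := (lipschitzWith_mul_sub_log_one_add_exp hY).dist_le_mul
    (dist μm (X ω) * dist μm β * cos (angle μm (X ω) β))
    (dist μm (X ω) * dist μm β' * cos (angle μm (X ω) β'))
  simp only [Real.dist_eq, NNReal.coe_one, one_mul] at hloglik
  linarith [hlogit β β' ω, abs_nonneg (dist μm (X ω) * dist μm β * cos (angle μm (X ω) β) -
    dist μm (X ω) * dist μm β' * cos (angle μm (X ω) β'))]

theorem stmt16 {M Ω : Type*} [MetricSpace M] [MeasurableSpace Ω]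
    (angle : M → M → M → ℝ)
    (CU αU : ℝ) (hCU : 0 < CU) (hαU : αU ∈ Set.Ioc (0 : ℝ) 1)
    (hlip : ∀ p q r u : M,
      |dist p q * Real.cos (angle p u q) - dist p r * Real.cos (angle p u r)| ≤
        CU * dist q r ^ αU)
    (P : Measure Ω) [IsProbabilityMeasure P]
    (X : Ω → M) (Y : Ω → ℝ) (hY01 : ∀ ω, Y ω = 0 ∨ Y ω = 1)
    (μm : M) (R : ℝ) (hR : 0 < R) (hsupp : ∀ ω, dist μm (X ω) ≤ R)
    (hint : ∀ β : M, Integrable (fun ω =>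
      Y ω * (dist μm (X ω) * dist μm β * Real.cos (angle μm (X ω) β)) -
        Real.log (1 + Real.exp
          (dist μm (X ω) * dist μm β * Real.cos (angle μm (X ω) β)))) P) :
    (∀ (β β' : M) (ω : Ω),
      |dist μm (X ω) * dist μm β * Real.cos (angle μm (X ω) β) -
          dist μm (X ω) * dist μm β' * Real.cos (angle μm (X ω) β')| ≤
        CU * R * dist β β' ^ αU) ∧
    ∀ β β' : M,
      |(∫ ω, (Y ω * (dist μm (X ω) * dist μm β * Real.cos (angle μm (X ω) β)) -
            Real.log (1 + Real.exp
              (dist μm (X ω) * dist μm β * Real.cos (angle μm (X ω) β)))) ∂P) -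
          ∫ ω, (Y ω * (dist μm (X ω) * dist μm β' * Real.cos (angle μm (X ω) β')) -
            Real.log (1 + Real.exp
              (dist μm (X ω) * dist μm β' * Real.cos (angle μm (X ω) β')))) ∂P| ≤
        2 * CU * R * dist β β' ^ αU :=
  stmt16_general angle CU αU hlip P X Y hY01 μm R hsupp hint
end
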